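/- There exist a strictly increasing sequence (s_n)_{n∈ℕ} of natural numbers and a real number α such that for all m, n ∈ ℕ, the distance from ((s_n + n)² − s_m²)·α to the nearest integer is at least 1/4. In particular, the difference set {(s_n + n)² : n ∈ ℕ} − {s_m² : m ∈ ℕ} is not a set of Bohr recurrence. -/

import Mathlib

/-!
Take `s n = 2 ^ 4 ^ (n + 5)`, so that `s (n + 1) = s n ^ 4`, and build `α` as the limit of
rationals `approx n` with denominator `s n ^ 2`, passing from `approx n` to `approx (n + 1)` by
adding a multiple of `1 / s (n + 1) ^ 2` smaller than `1 / s (n + 1)`. As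
`(s n + n) ^ 2 = s n ^ 2 + q n` with `q n = 2 n s n + n ^ 2` tiny compared with `s n ^ 2`, that
multiple can be chosen so that `q n * approx n` lies just above a half-integer, while
`s n ^ 2 * approx n` is an integer. The increments decay so fast that
`(s n + n) ^ 2 (α - approx n)` is negligible: `s m ^ 2 α` is close to an integer and
`(s n + n) ^ 2 α` close to a half-integer, so their difference stays `1/4` away from ℤ.
-/

/-- A set `R ⊆ ℤ` is a set of Bohr recurrence if for every `d`, every `α ∈ ℝ^d`
and every `ε > 0`, there is `r ∈ R` such that every coordinate of `rα` is within
`ε` of an integer. -/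
def BohrRecurrenceZ (R : Set ℤ) : Prop :=
  ∀ (d : ℕ) (α : Fin d → ℝ) (ε : ℝ), 0 < ε →
    ∃ r ∈ R, ∀ i : Fin d, ∃ k : ℤ, |(r : ℝ) * α i - (k : ℝ)| < ε

theorem not_bohrRecurrenceZ_of_forall_le_abs_sub {R : Set ℤ} {α ε : ℝ} (hε : 0 < ε)
    (h : ∀ r ∈ R, ∀ k : ℤ, ε ≤ |(r : ℝ) * α - k|) : ¬ BohrRecurrenceZ R := by
  intro hR
  obtain ⟨r, hr, hr'⟩ := hR 1 (fun _ ↦ α) ε hε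
  obtain ⟨k, hk⟩ := hr' 0
  exact (h r hr k).not_gt hk

theorem exists_dist_le_of_dist_succ_le_half_pow {X : Type*} [PseudoMetricSpace X]
    [CompleteSpace X] {f : ℕ → X} {T : ℕ → ℕ} (hT : StrictMono T)
    (hf : ∀ n, dist (f n) (f (n + 1)) ≤ (1 / 2 : ℝ) ^ T n) :
    ∃ a, ∀ n, dist (f n) a ≤ 2 * (1 / 2 : ℝ) ^ T n := by
  have hsum : Summable fun n ↦ (1 / 2 : ℝ) ^ T n :=
    summable_geometric_two.of_nonneg_of_le (fun _ ↦ by positivity)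
      fun n ↦ pow_le_pow_of_le_one (by norm_num) (by norm_num) (hT.id_le n)
  obtain ⟨a, ha⟩ := cauchySeq_tendsto_of_complete (cauchySeq_of_dist_le_of_summable _ hf hsum)
  refine ⟨a, fun n ↦ (dist_le_tsum_of_dist_le_of_tendsto _ hf hsum ha n).trans ?_⟩
  have htail : ∀ m, (1 / 2 : ℝ) ^ T (n + m) ≤ (1 / 2) ^ T n * (1 / 2) ^ m := fun m ↦ by
    rw [← pow_add]
    refine pow_le_pow_of_le_one (by norm_num) (by norm_num) ?_
    rw [add_comm n m, add_comm (T n) m]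
    exact hT.add_le_nat m n
  calc ∑' m, (1 / 2 : ℝ) ^ T (n + m)
      ≤ ∑' m, (1 / 2 : ℝ) ^ T n * (1 / 2) ^ m :=
        (hsum.comp_injective (add_right_injective n)).tsum_le_tsum htail
          (summable_geometric_two.mul_left _)
    _ = 2 * (1 / 2 : ℝ) ^ T n := by rw [tsum_mul_left, tsum_geometric_two, mul_comm]

theorem le_abs_sub_intCast_of_abs_sub_half_le {y : ℝ} {l : ℤ} (h : |y - l - 1 / 2| ≤ 1 / 4)
    (k : ℤ) : 1 / 4 ≤ |y - k| := by
  rw [abs_le] at h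
  rcases le_or_gt k l with hk | hk
  · have : (k : ℝ) ≤ l := by exact_mod_cast hk
    exact le_abs.mpr (Or.inl (by linarith))
  · have : (l : ℝ) + 1 ≤ k := by exact_mod_cast hk
    exact le_abs.mpr (Or.inr (by linarith))

/-- The number of steps of length `δ` needed to go from `θ` to the first point of `1/2 + ℤ`
at or above it. -/
noncomputable def stepsToHalf (θ δ : ℝ) : ℕ := ⌈(⌈θ - 1 / 2⌉ + 1 / 2 - θ) / δ⌉₊

section stepsToHalf

variable {θ δ : ℝ}

theorem le_stepsToHalf_mul (hδ : 0 < δ) : ⌈θ - 1 / 2⌉ + 1 / 2 - θ ≤ stepsToHalf θ δ * δ :=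
  (div_le_iff₀ hδ).mp (Nat.le_ceil _)

theorem stepsToHalf_mul_lt (hδ : 0 < δ) :
    stepsToHalf θ δ * δ < ⌈θ - 1 / 2⌉ + 1 / 2 - θ + δ := by
  have h0 : 0 ≤ (⌈θ - 1 / 2⌉ : ℝ) + 1 / 2 - θ := by linarith [Int.le_ceil (θ - 1 / 2)]
  have := Nat.ceil_lt_add_one (div_nonneg h0 hδ.le)
  rw [stepsToHalf, ← lt_div_iff₀ hδ, add_div, div_self hδ.ne']
  exact this

theorem stepsToHalf_mul_lt_one_add (hδ : 0 < δ) : stepsToHalf θ δ * δ < 1 + δ := by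
  linarith [stepsToHalf_mul_lt (θ := θ) hδ, Int.ceil_lt_add_one (θ - 1 / 2)]

theorem fract_add_stepsToHalf_mul_mem (hδ : 0 < δ) (hδ' : δ ≤ 1 / 2) :
    Int.fract (θ + stepsToHalf θ δ * δ) ∈ Set.Ico (1 / 2) (1 / 2 + δ) := by
  have hlo := le_stepsToHalf_mul (θ := θ) hδ
  have hhi := stepsToHalf_mul_lt (θ := θ) hδ
  have hfloor : ⌊θ + stepsToHalf θ δ * δ⌋ = ⌈θ - 1 / 2⌉ :=
    Int.floor_eq_iff.mpr ⟨by linarith, by linarith⟩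
  rw [← Int.self_sub_floor, hfloor]
  constructor <;> linarith

end stepsToHalf

namespace LacunaryBohr

def expo (n : ℕ) : ℕ := 4 ^ (n + 5)

def s (n : ℕ) : ℕ := 2 ^ expo n

def q (n : ℕ) : ℕ := 2 * n * s n + n ^ 2

noncomputable def step (n : ℕ) : ℝ := q n / (s n : ℝ) ^ 2

noncomputable def approx : ℕ → ℝ
  | 0 => 0
  | n + 1 => approx n + stepsToHalf (q (n + 1) * approx n) (step (n + 1)) / (s (n + 1) : ℝ) ^ 2

theorem expo_strictMono : StrictMono expo := fun _ _ h ↦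
  Nat.pow_lt_pow_right (by norm_num) (by omega)

theorem s_strictMono : StrictMono s := fun _ _ h ↦
  Nat.pow_lt_pow_right (by norm_num) (expo_strictMono h)

theorem s_succ (n : ℕ) : s (n + 1) = s n ^ 4 := by
  rw [s, s, ← pow_mul, expo, expo, pow_succ, mul_comm]

theorem two_pow_add_six_le_s (n : ℕ) : 2 ^ (n + 6) ≤ s n :=
  Nat.pow_le_pow_right (by norm_num) (Nat.lt_pow_self (by norm_num))

theorem sixtyFour_mul_le_s (n : ℕ) : 64 * n ≤ s n := by
  have hs := two_pow_add_six_le_s n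
  have hn : n < 2 ^ n := Nat.lt_two_pow_self
  rw [pow_add] at hs
  omega

theorem half_pow_expo (n : ℕ) : (1 / 2 : ℝ) ^ expo n = 1 / s n := by
  rw [s, Nat.cast_pow, one_div_pow, Nat.cast_ofNat]

theorem sq_add_eq (n : ℕ) : ((s n : ℝ) + n) ^ 2 = (s n : ℝ) ^ 2 + q n := by
  push_cast [q]; ring

theorem step_pos {n : ℕ} (hn : 0 < n) : 0 < step n := by
  have : 0 < s n := Nat.two_pow_pos _
  unfold step q; positivity

theorem step_le (n : ℕ) : step n ≤ 1 / 16 := by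
  have h64 : (64 * n : ℝ) ≤ s n := by exact_mod_cast sixtyFour_mul_le_s n
  have hs : (0 : ℝ) < s n := by exact_mod_cast Nat.two_pow_pos _
  rw [step, div_le_iff₀ (by positivity)]
  push_cast [q]
  nlinarith [Nat.cast_nonneg (α := ℝ) n]

theorem one_add_step_le_s_mul_step {n : ℕ} (hn : 0 < n) : 1 + step n ≤ s n * step n := by
  have hs : (0 : ℝ) < s n := by exact_mod_cast Nat.two_pow_pos _
  have hn : (1 : ℝ) ≤ n := by exact_mod_cast hn
  have : (s n : ℝ) * step n = 2 * n + n ^ 2 / s n := by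
    rw [step, q]; push_cast; field_simp
  rw [this]
  linarith [step_le n, show 0 ≤ (n : ℝ) ^ 2 / s n by positivity]

theorem dist_approx_succ_le (n : ℕ) :
    dist (approx n) (approx (n + 1)) ≤ (1 / 2 : ℝ) ^ expo (n + 1) := by
  set j := stepsToHalf (q (n + 1) * approx n) (step (n + 1))
  have hδ := step_pos n.succ_pos
  have hj : (j : ℝ) < s (n + 1) := lt_of_mul_lt_mul_right
    ((stepsToHalf_mul_lt_one_add hδ).trans_le (one_add_step_le_s_mul_step n.succ_pos)) hδ.le
  have hs : (0 : ℝ) < s (n + 1) := by exact_mod_cast Nat.two_pow_pos _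
  rw [dist_comm, Real.dist_eq, approx, add_sub_cancel_left, abs_of_nonneg (by positivity),
    half_pow_expo, div_le_div_iff₀ (by positivity) hs]
  nlinarith

theorem fract_q_mul_approx_mem (n : ℕ) :
    Int.fract (q (n + 1) * approx (n + 1)) ∈ Set.Ico (1 / 2) (1 / 2 + step (n + 1)) := by
  have h := fract_add_stepsToHalf_mul_mem (θ := q (n + 1) * approx n) (step_pos n.succ_pos)
    ((step_le _).trans (by norm_num))
  have hs : (0 : ℝ) < s (n + 1) := by exact_mod_cast Nat.two_pow_pos _
  convert h using 2
  rw [approx, step]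
  field_simp

theorem exists_intCast_eq_sq_mul_approx (n : ℕ) : ∃ k : ℤ, (s n : ℝ) ^ 2 * approx n = k := by
  induction n with
  | zero => exact ⟨0, by rw [approx, mul_zero, Int.cast_zero]⟩
  | succ n ih =>
    obtain ⟨k, hk⟩ := ih
    obtain ⟨r, hr⟩ : s n ∣ s (n + 1) := pow_dvd_pow 2 (expo_strictMono n.lt_succ_self).le
    have hs : (0 : ℝ) < s (n + 1) := by exact_mod_cast Nat.two_pow_pos _
    refine ⟨r ^ 2 * k + stepsToHalf (q (n + 1) * approx n) (step (n + 1)), ?_⟩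
    rw [approx, mul_add, mul_div_cancel₀ _ (by positivity)]
    push_cast
    rw [← hk, hr]
    push_cast
    ring

theorem sq_add_mul_tail_le (n : ℕ) :
    ((s n : ℝ) + n) ^ 2 * (2 * (1 / 2 : ℝ) ^ expo (n + 1)) ≤ 1 / 16 := by
  have h64 : (64 : ℝ) ≤ s n := by exact_mod_cast (two_pow_add_six_le_s n).trans' (by
    rw [pow_add]; exact Nat.le_mul_of_pos_left _ (Nat.two_pow_pos n))
  have hn : (n : ℝ) ≤ s n := by exact_mod_cast (sixtyFour_mul_le_s n).trans' (by omega)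
  have hs : (0 : ℝ) < s n := by linarith
  have hsq : ((s n : ℝ) + n) ^ 2 ≤ 4 * (s n : ℝ) ^ 2 := by nlinarith
  rw [half_pow_expo, s_succ, Nat.cast_pow, mul_one_div, ← mul_div_assoc,
    div_le_iff₀ (by positivity)]
  have h4096 : (4096 : ℝ) ≤ (s n : ℝ) ^ 2 := by nlinarith
  nlinarith [mul_le_mul_of_nonneg_right h4096 (sq_nonneg (s n : ℝ))]

section Limit

variable {α : ℝ} (hα : ∀ n, dist (approx n) α ≤ 2 * (1 / 2 : ℝ) ^ expo (n + 1))
include hα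

theorem abs_sq_add_mul_sub_approx_le (n : ℕ) :
    |((s n : ℝ) + n) ^ 2 * (α - approx n)| ≤ 1 / 16 := by
  rw [abs_mul, abs_sq, abs_sub_comm, ← Real.dist_eq]
  exact (mul_le_mul_of_nonneg_left (hα n) (sq_nonneg _)).trans (sq_add_mul_tail_le n)

theorem exists_abs_sq_mul_sub_le (n : ℕ) : ∃ k : ℤ, |(s n : ℝ) ^ 2 * α - k| ≤ 1 / 16 := by
  obtain ⟨k, hk⟩ := exists_intCast_eq_sq_mul_approx n
  refine ⟨k, ?_⟩
  have hle : (s n : ℝ) ^ 2 ≤ ((s n : ℝ) + n) ^ 2 := by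
    gcongr; exact le_add_of_nonneg_right n.cast_nonneg
  calc |(s n : ℝ) ^ 2 * α - k| = (s n : ℝ) ^ 2 * |α - approx n| := by
        rw [← hk, ← mul_sub, abs_mul, abs_sq]
    _ ≤ ((s n : ℝ) + n) ^ 2 * |α - approx n| := by gcongr
    _ ≤ 1 / 16 := by
        simpa only [abs_mul, abs_sq] using abs_sq_add_mul_sub_approx_le hα n

theorem exists_abs_sq_add_mul_sub_half_le {n : ℕ} (hn : 0 < n) :
    ∃ k : ℤ, |((s n : ℝ) + n) ^ 2 * α - k - 1 / 2| ≤ 1 / 8 := by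
  obtain ⟨n, rfl⟩ := Nat.exists_eq_add_one_of_ne_zero hn.ne'
  obtain ⟨k, hk⟩ := exists_intCast_eq_sq_mul_approx (n + 1)
  obtain ⟨hlo, hhi⟩ := fract_q_mul_approx_mem n
  have hstep := step_le (n + 1)
  have htail := abs_le.mp (abs_sq_add_mul_sub_approx_le hα (n + 1))
  refine ⟨k + ⌊(q (n + 1) : ℝ) * approx (n + 1)⌋, abs_le.mpr ?_⟩
  have hsplit : ((s (n + 1) : ℝ) + (n + 1 : ℕ)) ^ 2 * α
      = ((s (n + 1) : ℝ) + (n + 1 : ℕ)) ^ 2 * (α - approx (n + 1))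
        + (s (n + 1) : ℝ) ^ 2 * approx (n + 1) + q (n + 1) * approx (n + 1) := by
    rw [sq_add_eq]; ring
  rw [← Int.self_sub_floor] at hlo hhi
  rw [hsplit, hk]
  push_cast at htail ⊢
  constructor <;> linarith

end Limit

theorem quarter_le_abs_sub {α : ℝ}
    (hα : ∀ n, dist (approx n) α ≤ 2 * (1 / 2 : ℝ) ^ expo (n + 1)) {m n : ℕ} (hn : 0 < n)
    (k : ℤ) : 1 / 4 ≤ |((((s n : ℤ) + n) ^ 2 - (s m : ℤ) ^ 2 : ℤ) : ℝ) * α - k| := by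
  obtain ⟨K, hK⟩ := exists_abs_sq_mul_sub_le hα m
  obtain ⟨L, hL⟩ := exists_abs_sq_add_mul_sub_half_le hα hn
  refine le_abs_sub_intCast_of_abs_sub_half_le (l := L - K) ?_ k
  calc _ = |(((s n : ℝ) + n) ^ 2 * α - L - 1 / 2) - ((s m : ℝ) ^ 2 * α - K)| := by
        congr 1; push_cast; ring
    _ ≤ 1 / 8 + 1 / 16 := (abs_sub _ _).trans (add_le_add hL hK)
    _ ≤ 1 / 4 := by norm_num

end LacunaryBohr

open LacunaryBohr in
theorem exists_lacunary_difference_not_bohr :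
    ∃ (s : ℕ → ℕ) (α : ℝ), StrictMono s ∧
      (∀ m n : ℕ, 0 < m → 0 < n → ∀ k : ℤ,
        (1 / 4 : ℝ) ≤ |((((s n : ℤ) + n) ^ 2 - (s m : ℤ) ^ 2 : ℤ) : ℝ) * α - (k : ℝ)|) ∧
      ¬ BohrRecurrenceZ
        {z : ℤ | ∃ n m : ℕ, 0 < n ∧ 0 < m ∧ z = ((s n : ℤ) + n) ^ 2 - (s m : ℤ) ^ 2} := by
  obtain ⟨α, hα⟩ := exists_dist_le_of_dist_succ_le_half_pow (T := fun n ↦ expo (n + 1))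
    (fun _ _ h ↦ expo_strictMono (by omega)) dist_approx_succ_le
  refine ⟨s, α, s_strictMono, fun m n _ hn ↦ quarter_le_abs_sub hα hn,
    not_bohrRecurrenceZ_of_forall_le_abs_sub (α := α) (by norm_num : (0 : ℝ) < 1 / 4) ?_⟩
  rintro _ ⟨n, m, hn, -, rfl⟩
  exact quarter_le_abs_sub hα hn
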